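/- arXiv:1410.4191 — 2 statements merged into one kernel-verified Lean document; each statement's English description precedes it below -/
import Mathlib

section
/- Let G be a graph, B a minimum zero forcing set of G, and F a set of forces of B. Then pt(G, Rev(F)) ≤ pt(G, F), where Rev(F) is viewed as a set of forces of Term(F). -/
open SimpleGraph

variable {V : Type*}

/-- One simultaneous round of the color change rule: all currently forceable
vertices become black. -/
def forceStep (G : SimpleGraph V) (S : Set V) : Set V :=
  S ∪ {w | ∃ v ∈ S, G.Adj v w ∧ ∀ u, G.Adj v u → u ∉ S → u = w}

/-- The (cumulative) set of black vertices after `t` simultaneous rounds,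
starting from `B`; so `B^{(t)} = propSet G B t \ propSet G B (t-1)`. -/
def propSet (G : SimpleGraph V) (B : Set V) : ℕ → Set V
  | 0 => B
  | t + 1 => forceStep G (propSet G B t)

/-- `B` is a zero forcing set of `G`. -/
def IsZFSet (G : SimpleGraph V) (B : Set V) : Prop := ∃ t, propSet G B t = Set.univ

/-- The zero forcing number `Z(G)`. -/
noncomputable def zfNum (G : SimpleGraph V) : ℕ :=
  sInf {n | ∃ B : Set V, IsZFSet G B ∧ B.ncard = n}

/-- `B` is a minimum zero forcing set of `G`. -/
def IsMinZFSet (G : SimpleGraph V) (B : Set V) : Prop := IsZFSet G B ∧ B.ncard = zfNum G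

/-- The propagation time `pt(G,B)` of a zero forcing set `B`. -/
noncomputable def ptSet (G : SimpleGraph V) (B : Set V) : ℕ :=
  sInf {t | propSet G B t = Set.univ}

/-- The minimum propagation time `pt(G)`. -/
noncomputable def ptMin (G : SimpleGraph V) : ℕ :=
  sInf (ptSet G '' {B | IsMinZFSet G B})

/-- The maximum propagation time `PT(G)`. -/
noncomputable def ptMax (G : SimpleGraph V) : ℕ :=
  sSup (ptSet G '' {B | IsMinZFSet G B})

/-- `IsChronList G S L` : starting from black set `S`, the list `L` is a valid
chronological list of forces, performed one at a time, ending with all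
vertices black. -/
def IsChronList (G : SimpleGraph V) : Set V → List (V × V) → Prop
  | S, [] => S = Set.univ
  | S, (v, w) :: L =>
      v ∈ S ∧ w ∉ S ∧ G.Adj v w ∧ (∀ u, G.Adj v u → u ∉ S → u = w) ∧
        IsChronList G (insert w S) L

/-- `F` is a set of forces of `B`: the unordered set of forces of some
chronological list of forces of `B`. -/
def IsForceSet (G : SimpleGraph V) (B : Set V) (F : Set (V × V)) : Prop :=
  ∃ L : List (V × V), IsChronList G B L ∧ {p | p ∈ L} = F

/-- The terminus of a set of forces: the vertices performing no force. -/
def termSet (F : Set (V × V)) : Set V := {v | ∀ w, (v, w) ∉ F}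

/-- The reverse set of forces. -/
def revSet (F : Set (V × V)) : Set (V × V) := (fun p : V × V => (p.2, p.1)) '' F

/-- The (cumulative) set of black vertices after `t` rounds when propagating
using only the forces in `F`, starting from `B`;
so `F^{(t)} = fpropSet G B F t \ fpropSet G B F (t-1)`. -/
def fpropSet (G : SimpleGraph V) (B : Set V) (F : Set (V × V)) : ℕ → Set V
  | 0 => B
  | t + 1 => fpropSet G B F t ∪
      {w | ∃ v, (v, w) ∈ F ∧ v ∈ fpropSet G B F t ∧ w ∉ fpropSet G B F t ∧
        ∀ u, G.Adj v u → u ∉ fpropSet G B F t → u = w}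

/-- The propagation time `pt(G,F)` of a set of forces `F` of `B`. -/
noncomputable def ptForces (G : SimpleGraph V) (B : Set V) (F : Set (V × V)) : ℕ :=
  sInf {t | fpropSet G B F t = Set.univ}

/-- `B` is an efficient zero forcing set of `G`. -/
def IsEffZFSet (G : SimpleGraph V) (B : Set V) : Prop :=
  IsMinZFSet G B ∧ ptSet G B = ptMin G

/-- `F` is an efficient set of forces of the minimum zero forcing set `B`. -/
def IsEffForces (G : SimpleGraph V) (B : Set V) (F : Set (V × V)) : Prop :=
  IsMinZFSet G B ∧ IsForceSet G B F ∧ ptForces G B F = ptMin G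


/-! Induct on the reverse round `s`, pairing it with the forward round `t = pt(G,F) - s`: if every
target of `x` is still white at forward round `t`, then `x` is black at reverse round `s`. At `s = 0`
this holds because `x` then forces nothing, and at `t = 0` every target lies outside `B`, so all
vertices are black at reverse round `pt(G,F)`. In the step, let `x` force `w` by round `t + 1`,
with `w` white at round `t`; then `w` reverse-forces `x`. Indeed the target of `w` is forced after
`w` turns black, and a neighbour `u ≠ x` of `w` whose target `u'` was forced by round `t + 1` had
`w` as a white neighbour at that moment, so `w = u'` and `u` would be the forcer of `w`. -/

section ForceProcess

variable {G : SimpleGraph V} {B : Set V} {F : Set (V × V)}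

theorem fpropSet_monotone : Monotone (fpropSet G B F) :=
  monotone_nat_of_le_succ fun _ _ hx => Or.inl hx

theorem mem_fpropSet_succ_of_force {t : ℕ} {v w : V} (hvw : (v, w) ∈ F)
    (hv : v ∈ fpropSet G B F t) (hwhite : ∀ u, G.Adj v u → u ∉ fpropSet G B F t → u = w) :
    w ∈ fpropSet G B F (t + 1) := by
  by_cases hw : w ∈ fpropSet G B F t
  · exact Or.inl hw
  · exact Or.inr ⟨v, hvw, hv, hw, hwhite⟩

theorem exists_force_round_of_mem_fpropSet (hF : Set.InjOn Prod.snd F) {x w : V}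
    (hxw : (x, w) ∈ F) (hwB : w ∉ B) {n : ℕ} (hw : w ∈ fpropSet G B F n) :
    ∃ t < n, x ∈ fpropSet G B F t ∧ w ∉ fpropSet G B F t ∧
      ∀ u, G.Adj x u → u ∉ fpropSet G B F t → u = w := by
  induction n with
  | zero => exact absurd hw hwB
  | succ n ih =>
    rcases hw with hw | ⟨v, hvw, hv, hwn, hwhite⟩
    · obtain ⟨t, htn, ht⟩ := ih hw
      exact ⟨t, htn.trans n.lt_succ_self, ht⟩
    · obtain rfl : v = x := congrArg Prod.fst (hF hvw hxw rfl)
      exact ⟨n, n.lt_succ_self, hv, hwn, hwhite⟩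

theorem mem_fpropSet_of_target_mem_succ (hF : Set.InjOn Prod.snd F) {x w : V}
    (hxw : (x, w) ∈ F) (hwB : w ∉ B) {t : ℕ} (hw : w ∈ fpropSet G B F (t + 1)) :
    x ∈ fpropSet G B F t := by
  obtain ⟨t', ht', hx, -⟩ := exists_force_round_of_mem_fpropSet hF hxw hwB hw
  exact fpropSet_monotone (Nat.le_of_lt_succ ht') hx

theorem eq_forcer_of_adj_of_target_mem_succ (hF : Set.InjOn Prod.snd F) {x w u u' : V}
    (hxw : (x, w) ∈ F) (huu' : (u, u') ∈ F) (hu'B : u' ∉ B) (hadj : G.Adj u w) {t : ℕ}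
    (hw : w ∉ fpropSet G B F t) (hu' : u' ∈ fpropSet G B F (t + 1)) : u = x := by
  obtain ⟨t', ht', -, -, hwhite⟩ := exists_force_round_of_mem_fpropSet hF huu' hu'B hu'
  obtain rfl : w = u' :=
    hwhite w hadj fun hw' => hw (fpropSet_monotone (Nat.le_of_lt_succ ht') hw')
  exact congrArg Prod.fst (hF huu' hxw rfl)

theorem mem_fpropSet_termSet_revSet (hF : Set.InjOn Prod.snd F) (hB : ∀ p ∈ F, p.2 ∉ B) :
    ∀ s t, fpropSet G B F (s + t) = Set.univ → ∀ x,
      (∀ w, (x, w) ∈ F → w ∉ fpropSet G B F t) →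
        x ∈ fpropSet G (termSet F) (revSet F) s := by
  intro s
  induction s with
  | zero =>
    intro t hfull x hx w hxw
    rw [Nat.zero_add] at hfull
    exact hx w hxw (hfull ▸ Set.mem_univ w)
  | succ s ih =>
    intro t hfull x hx
    have ih' := ih (t + 1) (by rwa [Nat.add_comm t, ← Nat.add_assoc])
    by_cases hxs : x ∈ fpropSet G (termSet F) (revSet F) s
    · exact fpropSet_monotone s.le_succ hxs
    obtain ⟨w, hxw, hw⟩ : ∃ w, (x, w) ∈ F ∧ w ∈ fpropSet G B F (t + 1) := by
      by_contra! h
      exact hxs (ih' x h)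
    refine mem_fpropSet_succ_of_force ⟨(x, w), hxw, rfl⟩ ?_ ?_
    · refine ih' w fun w' hww' hw' => hx w hxw ?_
      exact mem_fpropSet_of_target_mem_succ hF hww' (hB _ hww') hw'
    · intro u hwu hus
      by_contra! hux
      refine hus (ih' u fun u' huu' hu' => hux ?_)
      exact eq_forcer_of_adj_of_target_mem_succ hF hxw huu' (hB _ huu') hwu.symm
        (hx w hxw) hu'

end ForceProcess

namespace IsChronList

variable {G : SimpleGraph V}

theorem snd_not_mem {S : Set V} {L : List (V × V)} (hL : IsChronList G S L) {p : V × V}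
    (hp : p ∈ L) : p.2 ∉ S := by
  induction L generalizing S with
  | nil => simp at hp
  | cons q L ih =>
    obtain ⟨-, hq, -, -, hL⟩ := hL
    rcases List.mem_cons.1 hp with rfl | hp
    · exact hq
    · exact fun hS => ih hL hp (Set.mem_insert_of_mem _ hS)

theorem nodup_map_snd {S : Set V} {L : List (V × V)} (hL : IsChronList G S L) :
    (L.map Prod.snd).Nodup := by
  induction L generalizing S with
  | nil => exact List.nodup_nil
  | cons q L ih =>
    obtain ⟨-, -, -, -, hL⟩ := hL
    refine List.nodup_cons.2 ⟨?_, ih hL⟩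
    simp only [List.mem_map, not_exists, not_and]
    intro p hp hpq
    exact hL.snd_not_mem hp (hpq ▸ Set.mem_insert _ _)

theorem fpropSet_add_length_eq_univ {B S : Set V} {F : Set (V × V)} {L : List (V × V)}
    (hL : IsChronList G S L) (hLF : ∀ p ∈ L, p ∈ F) {t : ℕ} (hS : S ⊆ fpropSet G B F t) :
    fpropSet G B F (t + L.length) = Set.univ := by
  induction L generalizing S t with
  | nil => exact Set.eq_univ_of_univ_subset (hL ▸ hS)
  | cons q L ih =>
    obtain ⟨hv, -, -, hwhite, hL⟩ := hL
    have hstep : insert q.2 S ⊆ fpropSet G B F (t + 1) := by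
      refine Set.insert_subset ?_ (hS.trans (fpropSet_monotone t.le_succ))
      refine mem_fpropSet_succ_of_force (hLF q List.mem_cons_self) (hS hv) ?_
      exact fun u hu hut => hwhite u hu fun huS => hut (hS huS)
    rw [List.length_cons, ← Nat.add_comm 1, ← Nat.add_assoc]
    exact ih hL (fun p hp => hLF p (List.mem_cons_of_mem _ hp)) hstep

end IsChronList

theorem ptForces_rev_le_general {V : Type*} (G : SimpleGraph V) (B : Set V)
    (F : Set (V × V)) (hF : IsForceSet G B F) :
    ptForces G (termSet F) (revSet F) ≤ ptForces G B F := by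
  obtain ⟨L, hL, rfl⟩ := hF
  have hinj : Set.InjOn Prod.snd {p | p ∈ L} := fun _ hp _ hq =>
    List.inj_on_of_nodup_map hL.nodup_map_snd hp hq
  have hB : ∀ p ∈ {p | p ∈ L}, p.2 ∉ B := fun _ hp => hL.snd_not_mem hp
  have hfull : fpropSet G B {p | p ∈ L} (ptForces G B {p | p ∈ L}) = Set.univ :=
    Nat.sInf_mem (s := {t | fpropSet G B {p | p ∈ L} t = Set.univ})
      ⟨0 + L.length, hL.fpropSet_add_length_eq_univ (fun _ => id) subset_rfl⟩
  refine Nat.sInf_le (Set.eq_univ_of_forall fun x => ?_)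
  exact mem_fpropSet_termSet_revSet hinj hB _ 0 hfull x fun w hxw => hB _ hxw

/-- For a minimum zero forcing set `B` and a set of forces `F` of `B`,
`pt(G, Rev(F)) ≤ pt(G, F)`. -/
theorem ptForces_rev_le {V : Type*} [Finite V] (G : SimpleGraph V) (B : Set V)
    (F : Set (V × V)) (hB : IsMinZFSet G B) (hF : IsForceSet G B F) :
    ptForces G (termSet F) (revSet F) ≤ ptForces G B F :=
  ptForces_rev_le_general G B F hF
end

section
/- A disconnected graph G satisfies pt(G) = |G| − 2 if and only if PT(G) = |G| − 2, if and only if G is the disjoint union of a path on |G|−1 vertices and an isolated vertex. -/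
open SimpleGraph

variable {V : Type*}

/-- The disjoint union of two graphs. -/
def disjUnion {α β : Type*} (G1 : SimpleGraph α) (G2 : SimpleGraph β) :
    SimpleGraph (α ⊕ β) :=
  SimpleGraph.fromRel (fun x y => match x, y with
    | Sum.inl a, Sum.inl b => G1.Adj a b
    | Sum.inr a, Sum.inr b => G2.Adj a b
    | _, _ => False)


/-!
A zero forcing set of a disconnected graph meets every component, so `Z(G) ≥ 2`; as every round
of propagation blackens a new vertex, `pt(G, B) ≤ |G| - |B| ≤ |G| - 2`, hence
`pt(G) ≤ PT(G) ≤ |G| - 2`.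

If a minimum zero forcing set `B = {x, y}` reaches `pt(G, B) = |G| - 2`, exactly one vertex turns
black in each round. One of `x`, `y`, say `y`, is then isolated, and the vertex turning black in
round `t + 1` is forced by the one of round `t` and has no other earlier neighbour, so listing the
vertices other than `y` by the round in which they turn black gives a path `P_{n-1}`.

Conversely, in `P_{n-1} ∪̇ P_1` a minimum zero forcing set consists of the isolated vertex and an
end of the path (an interior vertex can never force), and from an end, propagation needs `n - 2`
rounds to reach the other end.
-/

lemma disjUnion_eq_sum {α β : Type*} (G₁ : SimpleGraph α) (G₂ : SimpleGraph β) :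
    disjUnion G₁ G₂ = G₁ ⊕g G₂ := by
  ext (a | a) (b | b) <;> simp [disjUnion, adj_comm, and_iff_right_of_imp Adj.ne]

lemma not_adj_sum_pathGraph_one_inr {W : Type*} {H : SimpleGraph W} (j : Fin 1) (w : W ⊕ Fin 1) :
    ¬ (H ⊕g pathGraph 1).Adj (.inr j) w := by
  rcases w with w | j'
  · simp
  · rw [sum_adj_inr, Subsingleton.elim j j']
    exact (pathGraph 1).irrefl

section Propagation

variable {G : SimpleGraph V} {B S : Set V} {s t : ℕ}

lemma subset_forceStep : S ⊆ forceStep G S := Set.subset_union_left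

lemma propSet_monotone : Monotone (propSet G B) :=
  monotone_nat_of_le_succ fun _ => subset_forceStep

lemma exists_forcer {w : V} (hw : w ∈ forceStep G S) (hwS : w ∉ S) :
    ∃ v ∈ S, G.Adj v w ∧ G.neighborSet v ⊆ insert w S := by
  obtain hw | ⟨v, hv, hvw, hforce⟩ := hw
  · exact absurd hw hwS
  · exact ⟨v, hv, hvw, fun u hu => or_iff_not_imp_right.2 (hforce u hu)⟩

lemma propSet_eq_of_succ_eq (h : propSet G B (t + 1) = propSet G B t) (hts : t ≤ s) :
    propSet G B s = propSet G B t := by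
  induction s, hts using Nat.le_induction with
  | base => rfl
  | succ s _ ih => rw [propSet, ih, ← propSet, h]

lemma propSet_ptSet (hB : IsZFSet G B) : propSet G B (ptSet G B) = Set.univ :=
  Nat.sInf_mem hB

lemma propSet_eq_univ_of_ptSet_le (hB : IsZFSet G B) (ht : ptSet G B ≤ t) :
    propSet G B t = Set.univ :=
  Set.eq_univ_of_univ_subset (propSet_ptSet hB ▸ propSet_monotone ht)

lemma propSet_ssubset_succ (hB : IsZFSet G B) (ht : t < ptSet G B) :
    propSet G B t ⊂ propSet G B (t + 1) := by
  refine (propSet_monotone t.le_succ).ssubset_of_ne fun h => Nat.notMem_of_lt_sInf ht ?_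
  rw [Set.mem_ofPred_eq, ← propSet_ptSet hB, propSet_eq_of_succ_eq h.symm ht.le]

lemma ncard_propSet_add_le [Finite V] (hB : IsZFSet G B) (hst : s ≤ t) (ht : t ≤ ptSet G B) :
    (propSet G B s).ncard + (t - s) ≤ (propSet G B t).ncard := by
  induction t, hst using Nat.le_induction with
  | base => simp
  | succ t hst ih =>
    have := Set.ncard_lt_ncard (propSet_ssubset_succ hB ht)
    have := ih (by omega)
    omega

lemma ptSet_add_ncard_le [Finite V] (hB : IsZFSet G B) :
    ptSet G B + B.ncard ≤ Nat.card V := by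
  have := ncard_propSet_add_le hB (Nat.zero_le _) le_rfl
  rw [propSet_ptSet hB, Set.ncard_univ, Nat.sub_zero] at this
  exact (add_comm _ _).trans_le this

lemma propSet_empty : propSet G ∅ t = ∅ := by
  induction t with
  | zero => rfl
  | succ t ih => simp [propSet, ih, forceStep]

lemma mem_of_isolated_of_mem_propSet {v : V} (hv : ∀ u, ¬ G.Adj u v)
    (h : v ∈ propSet G B t) : v ∈ B := by
  induction t with
  | zero => exact h
  | succ t ih =>
    obtain h | ⟨u, -, huv, -⟩ := h
    exacts [ih h, absurd huv (hv u)]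

lemma exists_isMinZFSet : ∃ B : Set V, IsMinZFSet G B :=
  Nat.sInf_mem (s := {n | ∃ B : Set V, IsZFSet G B ∧ B.ncard = n})
    ⟨_, Set.univ, ⟨0, rfl⟩, rfl⟩

lemma ptSet_image_nonempty : (ptSet G '' {B | IsMinZFSet G B}).Nonempty :=
  let ⟨B, hB⟩ := exists_isMinZFSet (G := G)
  ⟨ptSet G B, B, hB, rfl⟩

end Propagation

section BlackTime

variable {G : SimpleGraph V} {B : Set V} {t : ℕ} {z : V}

noncomputable def blackTime (G : SimpleGraph V) (B : Set V) (z : V) : ℕ :=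
  sInf {t | z ∈ propSet G B t}

lemma mem_propSet_iff_blackTime_le (hB : IsZFSet G B) :
    z ∈ propSet G B t ↔ blackTime G B z ≤ t := by
  refine ⟨fun h => Nat.sInf_le h, fun h => propSet_monotone h ?_⟩
  exact Nat.sInf_mem (s := {t | z ∈ propSet G B t})
    ⟨ptSet G B, by rw [Set.mem_ofPred_eq, propSet_ptSet hB]; trivial⟩

lemma blackTime_le_ptSet (hB : IsZFSet G B) : blackTime G B z ≤ ptSet G B :=
  (mem_propSet_iff_blackTime_le hB).1 (by rw [propSet_ptSet hB]; trivial)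

lemma blackTime_eq_zero_iff (hB : IsZFSet G B) : blackTime G B z = 0 ↔ z ∈ B :=
  Nat.le_zero.symm.trans (mem_propSet_iff_blackTime_le hB).symm

lemma exists_blackTime_eq_succ (hB : IsZFSet G B) (ht : t < ptSet G B) :
    ∃ z, blackTime G B z = t + 1 := by
  obtain ⟨z, hz, hzt⟩ := Set.exists_of_ssubset (propSet_ssubset_succ hB ht)
  rw [mem_propSet_iff_blackTime_le hB] at hz hzt
  exact ⟨z, by omega⟩

end BlackTime

section Tight

variable [Finite V] {G : SimpleGraph V} {B : Set V} {t : ℕ}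

lemma ncard_propSet_of_tight (hB : IsZFSet G B) (htight : ptSet G B + B.ncard = Nat.card V)
    (ht : t ≤ ptSet G B) : (propSet G B t).ncard = B.ncard + t := by
  have hlow := ncard_propSet_add_le hB (Nat.zero_le t) ht
  have hup := ncard_propSet_add_le hB ht le_rfl
  rw [propSet_ptSet hB, Set.ncard_univ] at hup
  simp only [Nat.sub_zero] at hlow
  exact le_antisymm (by omega) hlow

lemma ncard_propSet_succ_diff_le_one (hB : IsZFSet G B)
    (htight : ptSet G B + B.ncard = Nat.card V) :
    (propSet G B (t + 1) \ propSet G B t).ncard ≤ 1 := by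
  rcases lt_or_ge t (ptSet G B) with ht | ht
  · rw [Set.ncard_sdiff (propSet_monotone t.le_succ), ncard_propSet_of_tight hB htight ht,
      ncard_propSet_of_tight hB htight ht.le]
    omega
  · simp [propSet_eq_univ_of_ptSet_le hB ht, propSet_eq_univ_of_ptSet_le hB (ht.trans t.le_succ)]

lemma blackTime_injOn_compl (hB : IsZFSet G B) (htight : ptSet G B + B.ncard = Nat.card V) :
    Set.InjOn (blackTime G B) Bᶜ := by
  intro z hz z' hz' h
  obtain ⟨t, ht⟩ : ∃ t, blackTime G B z = t + 1 :=
    Nat.exists_eq_succ_of_ne_zero fun h0 => hz ((blackTime_eq_zero_iff hB).1 h0)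
  have mem_diff : ∀ u, blackTime G B u = t + 1 → u ∈ propSet G B (t + 1) \ propSet G B t :=
    fun u hu => by simp only [Set.mem_sdiff, mem_propSet_iff_blackTime_le hB, hu]; omega
  exact (Set.ncard_le_one).1 (ncard_propSet_succ_diff_le_one hB htight) _ (mem_diff z ht) _
    (mem_diff z' (h ▸ ht))

end Tight

section Components

variable {G : SimpleGraph V} {B S : Set V} {t : ℕ} (C : G.ConnectedComponent)

lemma forceStep_inter_supp : forceStep G S ∩ C.supp = forceStep G (S ∩ C.supp) := by
  ext w
  constructor
  · rintro ⟨hw | ⟨v, hv, hvw, hforce⟩, hwC⟩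
    · exact Or.inl ⟨hw, hwC⟩
    · have hvC : v ∈ C.supp := (C.mem_supp_congr_adj hvw).2 hwC
      refine Or.inr ⟨v, ⟨hv, hvC⟩, hvw, fun u hvu hu => hforce u hvu fun huS => ?_⟩
      exact hu ⟨huS, (C.mem_supp_congr_adj hvu).1 hvC⟩
  · rintro (hw | ⟨v, hv, hvw, hforce⟩)
    · exact ⟨Or.inl hw.1, hw.2⟩
    · exact ⟨Or.inr ⟨v, hv.1, hvw, fun u hvu hu => hforce u hvu fun huS => hu huS.1⟩,
        (C.mem_supp_congr_adj hvw).1 hv.2⟩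

lemma propSet_inter_supp : propSet G B t ∩ C.supp = propSet G (B ∩ C.supp) t := by
  induction t with
  | zero => rfl
  | succ t ih => rw [propSet, forceStep_inter_supp, ih, propSet]

lemma inter_supp_nonempty (hB : IsZFSet G B) : (B ∩ C.supp).Nonempty := by
  by_contra h
  have h' := propSet_inter_supp C (B := B) (t := ptSet G B)
  rw [propSet_ptSet hB, Set.univ_inter, Set.not_nonempty_iff_eq_empty.1 h, propSet_empty] at h'
  exact Set.not_nonempty_empty (h' ▸ C.nonempty_supp)

lemma not_reachable_of_isZFSet_pair {x y : V} (hd : ¬ G.Connected) (hB : IsZFSet G {x, y}) :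
    ¬ G.Reachable x y := by
  intro hxy
  have reachable_from_x (z : V) : G.Reachable x z := by
    obtain ⟨u, hu, huz⟩ := inter_supp_nonempty (G.connectedComponentMk z) hB
    rcases hu with rfl | rfl
    exacts [ConnectedComponent.exact huz, hxy.trans (ConnectedComponent.exact huz)]
  exact hd ((connected_iff G).2 ⟨fun a b => (reachable_from_x a).symm.trans (reachable_from_x b),
    ⟨x⟩⟩)

/-- Propagation inside a component does not depend on the rest of the graph, so a component that
stalls never fills. -/
lemma exists_mem_supp_propSet_succ_diff (hB : IsZFSet G B) (hC : ¬ C.supp ⊆ propSet G B t) :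
    ∃ a ∈ C.supp, a ∈ propSet G B (t + 1) \ propSet G B t := by
  by_contra! hstall
  have hstable : propSet G (B ∩ C.supp) (t + 1) = propSet G (B ∩ C.supp) t := by
    rw [← propSet_inter_supp, ← propSet_inter_supp]
    refine Set.Subset.antisymm (fun a ha => ⟨?_, ha.2⟩)
      (Set.inter_subset_inter_left _ (propSet_monotone t.le_succ))
    exact not_not.1 fun h => hstall a ha.2 ⟨ha.1, h⟩
  apply hC
  calc C.supp = propSet G B (max (ptSet G B) t) ∩ C.supp := by
        rw [propSet_eq_univ_of_ptSet_le hB (le_max_left _ _), Set.univ_inter]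
    _ = propSet G B t ∩ C.supp := by
        rw [propSet_inter_supp, propSet_eq_of_succ_eq hstable (le_max_right _ _),
          propSet_inter_supp]
    _ ⊆ propSet G B t := Set.inter_subset_left

end Components

section Disconnected

variable [Finite V] {G : SimpleGraph V} {B : Set V} {x y : V}

lemma two_le_ncard_of_not_connected [Nonempty V] (hd : ¬ G.Connected) (hB : IsZFSet G B) :
    2 ≤ B.ncard := by
  obtain ⟨a, b, hab⟩ : ∃ a b, ¬ G.Reachable a b := by
    simpa [connected_iff, Preconnected] using hd
  obtain ⟨u, huB, hua⟩ := inter_supp_nonempty (G.connectedComponentMk a) hB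
  obtain ⟨v, hvB, hvb⟩ := inter_supp_nonempty (G.connectedComponentMk b) hB
  have huv : u ≠ v := by
    rintro rfl
    exact hab (ConnectedComponent.exact (hua.symm.trans hvb))
  exact (Set.ncard_pair huv).symm.le.trans (Set.ncard_le_ncard (Set.pair_subset huB hvB))

lemma ptSet_add_two_le [Nonempty V] (hd : ¬ G.Connected) (hB : IsZFSet G B) :
    ptSet G B + 2 ≤ Nat.card V :=
  (Nat.add_le_add_left (two_le_ncard_of_not_connected hd hB) _).trans (ptSet_add_ncard_le hB)

/-- If `x` and `y` both had neighbours, the first round would already turn a vertex black in each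
of their components. -/
lemma forall_not_adj_or_of_tight (hB : IsZFSet G {x, y})
    (htight : ptSet G {x, y} + ({x, y} : Set V).ncard = Nat.card V) (hxy : ¬ G.Reachable x y) :
    (∀ z, ¬ G.Adj x z) ∨ ∀ z, ¬ G.Adj y z := by
  have first_round (u u' : V) (h : G.Adj u u') (hu' : u' ∉ ({x, y} : Set V)) :
      ∃ a, G.Reachable u a ∧ a ∈ propSet G {x, y} 1 \ {x, y} := by
    obtain ⟨a, ha, ha'⟩ := exists_mem_supp_propSet_succ_diff (G.connectedComponentMk u) hB
      (t := 0) fun hsub => hu' (hsub (((G.connectedComponentMk u).mem_supp_congr_adj h).1 rfl))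
    exact ⟨a, (ConnectedComponent.exact ha).symm, ha'⟩
  by_contra! h
  obtain ⟨⟨x', hx'⟩, ⟨y', hy'⟩⟩ := h
  obtain ⟨a, hxa, ha⟩ := first_round x x' hx' <| by
    rintro (h | h)
    exacts [hx'.ne h.symm, hxy (h ▸ hx'.reachable)]
  obtain ⟨b, hyb, hb⟩ := first_round y y' hy' <| by
    rintro (h | h)
    exacts [hxy (h ▸ hy'.reachable).symm, hy'.ne h.symm]
  have hab : a = b := (Set.ncard_le_one).1 (ncard_propSet_succ_diff_le_one hB htight) _ ha _ hb
  exact hxy (hxa.trans (hab ▸ hyb.symm))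

end Disconnected

section PropagationTimeBounds

variable [Finite V] {G : SimpleGraph V}

lemma bddAbove_ptSet_image : BddAbove (ptSet G '' {B | IsMinZFSet G B}) :=
  ⟨Nat.card V, by
    rintro _ ⟨B, hB, rfl⟩
    exact (Nat.le_add_right _ _).trans (ptSet_add_ncard_le hB.1)⟩

lemma ptMin_le_ptMax : ptMin G ≤ ptMax G :=
  csInf_le_csSup ptSet_image_nonempty (OrderBot.bddBelow _) bddAbove_ptSet_image

lemma exists_isMinZFSet_ptSet_eq_ptMax : ∃ B, IsMinZFSet G B ∧ ptSet G B = ptMax G :=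
  Nat.sSup_mem ptSet_image_nonempty bddAbove_ptSet_image

lemma ptMax_add_two_le [Nonempty V] (hd : ¬ G.Connected) : ptMax G + 2 ≤ Nat.card V := by
  obtain ⟨B, hB, hBmax⟩ := exists_isMinZFSet_ptSet_eq_ptMax (G := G)
  exact hBmax ▸ ptSet_add_two_le hd hB.1

end PropagationTimeBounds

section PathStructure

variable [Finite V] {G : SimpleGraph V} {x y : V}

lemma blackTime_injOn_ne_of_tight (hxy : x ≠ y) (hB : IsZFSet G {x, y})
    (htight : ptSet G {x, y} + 2 = Nat.card V) :
    Set.InjOn (blackTime G {x, y}) {z | z ≠ y} := by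
  intro z hz z' hz' h
  rcases eq_or_ne (blackTime G {x, y} z) 0 with h0 | h0
  · have h0' := h ▸ h0
    rw [blackTime_eq_zero_iff hB] at h0 h0'
    exact (h0.resolve_right hz).trans (h0'.resolve_right hz').symm
  · rw [← Set.ncard_pair hxy] at htight
    exact blackTime_injOn_compl hB htight (mt (blackTime_eq_zero_iff hB).2 h0)
      (mt (blackTime_eq_zero_iff hB).2 (h ▸ h0)) h

/-- The forcer of the unique vertex turning black in round `s + 1` cannot have turned black before
round `s`, since its neighbours would all be black already. -/
lemma neighborSet_subset_propSet_blackTime_succ (hxy : x ≠ y) (hB : IsZFSet G {x, y})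
    (htight : ptSet G {x, y} + 2 = Nat.card V) (hy : ∀ z, ¬ G.Adj y z) {v : V} (hv : v ≠ y)
    (hvt : blackTime G {x, y} v < ptSet G {x, y}) :
    G.neighborSet v ⊆ propSet G {x, y} (blackTime G {x, y} v + 1) := by
  induction hs : blackTime G {x, y} v using Nat.strong_induction_on generalizing v with
  | _ s ih =>
  subst hs
  obtain ⟨z, hz⟩ := exists_blackTime_eq_succ hB hvt
  have hz_mem : z ∈ propSet G {x, y} (blackTime G {x, y} v + 1) :=
    (mem_propSet_iff_blackTime_le hB).2 hz.le
  have hz_new : z ∉ propSet G {x, y} (blackTime G {x, y} v) := by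
    rw [mem_propSet_iff_blackTime_le hB]; omega
  obtain ⟨u, hu_mem, huz, hN⟩ := exists_forcer hz_mem hz_new
  have hu : u ≠ y := by rintro rfl; exact hy z huz
  have hu_time : blackTime G {x, y} u = blackTime G {x, y} v := by
    have hle := (mem_propSet_iff_blackTime_le hB).1 hu_mem
    refine hle.eq_or_lt.resolve_right fun hlt => ?_
    have := (mem_propSet_iff_blackTime_le hB).1 (ih _ hlt hu (hlt.trans hvt) rfl huz)
    omega
  obtain rfl := blackTime_injOn_ne_of_tight hxy hB htight hu hv hu_time
  exact hN.trans (Set.insert_subset hz_mem (propSet_monotone (Nat.le_succ _)))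

lemma adj_iff_blackTime (hxy : x ≠ y) (hB : IsZFSet G {x, y})
    (htight : ptSet G {x, y} + 2 = Nat.card V) (hy : ∀ z, ¬ G.Adj y z) {z z' : V}
    (hz : z ≠ y) (hz' : z' ≠ y) :
    G.Adj z z' ↔ blackTime G {x, y} z + 1 = blackTime G {x, y} z' ∨
      blackTime G {x, y} z' + 1 = blackTime G {x, y} z := by
  have later_eq_succ {a b : V} (ha : a ≠ y) (hab : G.Adj a b)
      (hlt : blackTime G {x, y} a < blackTime G {x, y} b) :
      blackTime G {x, y} b = blackTime G {x, y} a + 1 := by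
    have hb := neighborSet_subset_propSet_blackTime_succ hxy hB htight hy ha
      (hlt.trans_le (blackTime_le_ptSet hB)) hab
    rw [mem_propSet_iff_blackTime_le hB] at hb
    omega
  have adj_of_succ {a b : V} (ha : a ≠ y)
      (h : blackTime G {x, y} a + 1 = blackTime G {x, y} b) : G.Adj a b := by
    obtain ⟨u, hu_mem, hub, -⟩ := exists_forcer
      ((mem_propSet_iff_blackTime_le hB).2 h.ge) (by rw [mem_propSet_iff_blackTime_le hB]; omega)
    have hu : u ≠ y := by rintro rfl; exact hy b hub
    have hu_time := later_eq_succ hu hub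
      ((mem_propSet_iff_blackTime_le hB).1 hu_mem |>.trans_lt (by omega))
    obtain rfl := blackTime_injOn_ne_of_tight hxy hB htight hu ha (by omega)
    exact hub
  constructor
  · intro hadj
    rcases lt_trichotomy (blackTime G {x, y} z) (blackTime G {x, y} z') with hlt | heq | hgt
    · exact Or.inl (later_eq_succ hz hadj hlt).symm
    · exact absurd (blackTime_injOn_ne_of_tight hxy hB htight hz hz' heq ▸ hadj) (G.irrefl)
    · exact Or.inr (later_eq_succ hz' hadj.symm hgt).symm
  · rintro (h | h)
    exacts [adj_of_succ hz h, (adj_of_succ hz' h).symm]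

lemma nonempty_iso_pathGraph_sum_of_tight (hxy : x ≠ y) (hB : IsZFSet G {x, y})
    (htight : ptSet G {x, y} + 2 = Nat.card V) (hy : ∀ z, ¬ G.Adj y z) :
    Nonempty (G ≃g pathGraph (ptSet G {x, y} + 1) ⊕g pathGraph 1) := by
  classical
  let f (z : V) : Fin (ptSet G {x, y} + 1) ⊕ Fin 1 :=
    if z = y then .inr 0
    else .inl ⟨blackTime G {x, y} z, Nat.lt_succ_of_le (blackTime_le_ptSet hB)⟩
  have hinj : Function.Injective f := by
    intro a b hab
    by_cases ha : a = y <;> by_cases hb : b = y <;> simp [f, ha, hb] at hab ⊢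
    exact blackTime_injOn_ne_of_tight hxy hB htight ha hb hab
  have hbij := hinj.bijective_of_nat_card_le
    (by rw [Nat.card_sum, Nat.card_fin, Nat.card_fin]; omega)
  refine ⟨⟨Equiv.ofBijective f hbij, fun {a b} => ?_⟩⟩
  simp only [Equiv.ofBijective_apply, f]
  by_cases ha : a = y
  · rw [if_pos ha]
    exact iff_of_false (not_adj_sum_pathGraph_one_inr _ _) (ha ▸ hy b)
  by_cases hb : b = y
  · rw [if_pos hb, ← adj_comm, adj_comm G]
    exact iff_of_false (not_adj_sum_pathGraph_one_inr _ _) (hb ▸ hy a)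
  simp [ha, hb, pathGraph_adj, adj_iff_blackTime hxy hB htight hy ha hb]

end PathStructure

lemma nonempty_iso_of_ptMax_add_two_eq [Finite V] [Nonempty V] {G : SimpleGraph V}
    (hd : ¬ G.Connected) (h : ptMax G + 2 = Nat.card V) :
    Nonempty (G ≃g pathGraph (Nat.card V - 1) ⊕g pathGraph 1) := by
  obtain ⟨B, hBmin, hBmax⟩ := exists_isMinZFSet_ptSet_eq_ptMax (G := G)
  have hpt : ptSet G B + 2 = Nat.card V := hBmax ▸ h
  have hcard : B.ncard = 2 := by
    have := ptSet_add_ncard_le hBmin.1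
    have := two_le_ncard_of_not_connected hd hBmin.1
    omega
  obtain ⟨x, y, hxy, rfl⟩ := Set.ncard_eq_two.1 hcard
  rw [show Nat.card V - 1 = ptSet G {x, y} + 1 by omega]
  rcases forall_not_adj_or_of_tight hBmin.1 (by rwa [Set.ncard_pair hxy])
    (not_reachable_of_isZFSet_pair hd hBmin.1) with hx | hy
  · rw [Set.pair_comm] at hBmin hpt ⊢
    exact nonempty_iso_pathGraph_sum_of_tight hxy.symm hBmin.1 hpt hx
  · exact nonempty_iso_pathGraph_sum_of_tight hxy hBmin.1 hpt hy

section PathPlusIsolatedVertex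

open Sum

variable {k : ℕ}

lemma inl_mem_propSet_of_val_le {t : ℕ} {i : Fin (k + 1)} (hi : i.val ≤ t) :
    inl i ∈ propSet (pathGraph (k + 1) ⊕g pathGraph 1) {inl 0, inr 0} t := by
  induction t generalizing i with
  | zero => exact Or.inl (congrArg inl (Fin.ext (Nat.le_zero.1 hi)))
  | succ t ih =>
    rcases hi.lt_or_eq with hi | hi
    · exact propSet_monotone t.le_succ (ih (Nat.le_of_lt_succ hi))
    · have ht : t < k + 1 := by omega
      have hadj : (pathGraph (k + 1) ⊕g pathGraph 1).Adj (inl ⟨t, ht⟩) (inl i) := by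
        simp only [sum_adj_inl, pathGraph_adj]
        omega
      refine Or.inr ⟨inl ⟨t, ht⟩, ih le_rfl, hadj, ?_⟩
      rintro (j | j) hadj hj
      · simp only [sum_adj_inl, pathGraph_adj] at hadj
        rcases hadj with hadj | hadj
        · exact congrArg inl (Fin.ext (by omega))
        · exact absurd (ih (by omega)) hj
      · exact absurd hadj (not_adj_sum_inl_inr _ _)

lemma isZFSet_inl_zero_inr : IsZFSet (pathGraph (k + 1) ⊕g pathGraph 1) {inl 0, inr 0} := by
  refine ⟨k, Set.eq_univ_of_forall ?_⟩
  rintro (i | j)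
  · exact inl_mem_propSet_of_val_le (Nat.le_of_lt_succ i.isLt)
  · exact propSet_monotone (Nat.zero_le k) (Or.inr (congrArg inr (Subsingleton.elim j 0)))

lemma val_le_of_inl_mem_propSet {a i : Fin (k + 1)} {t : ℕ}
    (h : inl i ∈ propSet (pathGraph (k + 1) ⊕g pathGraph 1) {inl a, inr 0} t) :
    i.val ≤ a.val + t ∧ a.val ≤ i.val + t := by
  induction t generalizing i with
  | zero =>
    obtain h | h := h
    · obtain rfl := inl_injective h
      omega
    · exact absurd h inl_ne_inr
  | succ t ih =>
    obtain h | ⟨j | j, hj, hadj, -⟩ := h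
    · have := ih h; omega
    · have := ih hj
      simp only [sum_adj_inl, pathGraph_adj] at hadj
      omega
    · exact absurd hadj.symm (not_adj_sum_inl_inr _ _)

lemma forceStep_inl_inr_of_interior {a : Fin (k + 1)} (h0 : 0 < a.val) (hk : a.val < k) :
    forceStep (pathGraph (k + 1) ⊕g pathGraph 1) {inl a, inr 0} = {inl a, inr 0} := by
  refine (Set.Subset.antisymm ?_ subset_forceStep)
  intro w hw
  by_contra hwB
  obtain ⟨v, hv, hvw, hN⟩ := exists_forcer hw hwB
  obtain rfl | rfl := hv
  · have white_nbr (j : Fin (k + 1)) (hj : j.val + 1 = a.val ∨ a.val + 1 = j.val) :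
        inl j = w := by
      refine (hN (by rw [mem_neighborSet, sum_adj_inl, pathGraph_adj]; omega)).resolve_right ?_
      rintro (h | h)
      · simp only [inl.injEq, Fin.ext_iff] at h; omega
      · exact inl_ne_inr h
    have := (white_nbr ⟨a.val - 1, by omega⟩ (by dsimp only; omega)).trans
      (white_nbr ⟨a.val + 1, by omega⟩ (by simp)).symm
    simp [Fin.ext_iff] at this
  · exact not_adj_sum_pathGraph_one_inr _ _ hvw

lemma zfNum_pathGraph_sum_pathGraph_one : zfNum (pathGraph (k + 1) ⊕g pathGraph 1) = 2 := by
  obtain ⟨B, hB⟩ := exists_isMinZFSet (G := pathGraph (k + 1) ⊕g pathGraph 1)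
  exact le_antisymm (Nat.sInf_le ⟨_, isZFSet_inl_zero_inr, Set.ncard_pair (by simp)⟩)
    (hB.2 ▸ two_le_ncard_of_not_connected not_connected_sum hB.1)

lemma exists_eq_pair_of_isMinZFSet {B : Set (Fin (k + 1) ⊕ Fin 1)}
    (hB : IsMinZFSet (pathGraph (k + 1) ⊕g pathGraph 1) B) : ∃ a, B = {inl a, inr 0} := by
  have hcard : B.ncard = 2 := hB.2.trans zfNum_pathGraph_sum_pathGraph_one
  have hinr : inr 0 ∈ B := mem_of_isolated_of_mem_propSet (t := ptSet _ B)
    (fun u hu => not_adj_sum_pathGraph_one_inr _ _ hu.symm) (by rw [propSet_ptSet hB.1]; trivial)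
  obtain ⟨a | j, haB, hne⟩ := Set.exists_ne_of_one_lt_ncard (hcard ▸ one_lt_two) (inr 0)
  · exact ⟨a, (Set.eq_of_subset_of_ncard_le (Set.pair_subset haB hinr)
      (by rw [hcard, Set.ncard_pair (by simp)]) B.toFinite).symm⟩
  · exact absurd (congrArg inr (Subsingleton.elim j 0)) hne

lemma val_eq_zero_or_eq_of_isZFSet {a : Fin (k + 1)}
    (hB : IsZFSet (pathGraph (k + 1) ⊕g pathGraph 1) {inl a, inr 0}) :
    a.val = 0 ∨ a.val = k := by
  by_contra! h
  have hstuck := propSet_eq_of_succ_eq (t := 0) (forceStep_inl_inr_of_interior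
    (Nat.pos_of_ne_zero h.1) (lt_of_le_of_ne (Nat.le_of_lt_succ a.isLt) h.2))
    (Nat.zero_le (ptSet (pathGraph (k + 1) ⊕g pathGraph 1) {inl a, inr 0}))
  rw [propSet_ptSet hB] at hstuck
  obtain h0 | h0 := hstuck ▸ Set.mem_univ (inl 0 : Fin (k + 1) ⊕ Fin 1)
  · exact h.1 (congrArg Fin.val (inl_injective h0)).symm
  · exact inl_ne_inr h0

lemma ptSet_eq_of_isMinZFSet {B : Set (Fin (k + 1) ⊕ Fin 1)}
    (hB : IsMinZFSet (pathGraph (k + 1) ⊕g pathGraph 1) B) :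
    ptSet (pathGraph (k + 1) ⊕g pathGraph 1) B = k := by
  obtain ⟨a, rfl⟩ := exists_eq_pair_of_isMinZFSet hB
  have h_end := val_eq_zero_or_eq_of_isZFSet hB.1
  have hupper := ptSet_add_ncard_le hB.1
  rw [Set.ncard_pair (by simp), Nat.card_sum, Nat.card_fin, Nat.card_fin] at hupper
  have hlower := val_le_of_inl_mem_propSet (a := a) (i := ⟨k - a.val, by omega⟩)
    (by rw [propSet_ptSet hB.1]; trivial)
  rw [Fin.val_mk] at hlower
  omega

lemma ptMin_pathGraph_sum_pathGraph_one : ptMin (pathGraph (k + 1) ⊕g pathGraph 1) = k := by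
  have himage : ptSet (pathGraph (k + 1) ⊕g pathGraph 1) '' {B | IsMinZFSet _ B} = {k} :=
    ptSet_image_nonempty.subset_singleton_iff.1 (by
      rintro _ ⟨B, hB, rfl⟩
      exact ptSet_eq_of_isMinZFSet hB)
  rw [ptMin, himage, csInf_singleton]

end PathPlusIsolatedVertex

namespace SimpleGraph.Iso

variable {W : Type*} {G : SimpleGraph V} {H : SimpleGraph W}

lemma forceStep_preimage (e : G ≃g H) (S : Set W) :
    forceStep G (e ⁻¹' S) = e ⁻¹' forceStep H S := by
  ext w
  simp only [forceStep, Set.mem_union, Set.mem_preimage, Set.mem_ofPred_eq,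
    e.surjective.exists, e.surjective.forall, e.map_adj_iff, e.injective.eq_iff]

lemma propSet_preimage (e : G ≃g H) (B : Set W) (t : ℕ) :
    propSet G (e ⁻¹' B) t = e ⁻¹' propSet H B t := by
  induction t with
  | zero => rfl
  | succ t ih => rw [propSet, ih, e.forceStep_preimage, propSet]

lemma preimage_eq_univ_iff (e : G ≃g H) {S : Set W} : e ⁻¹' S = Set.univ ↔ S = Set.univ := by
  rw [Set.preimage_eq_univ_iff, e.surjective.range_eq, Set.univ_subset_iff]

lemma isZFSet_preimage (e : G ≃g H) {B : Set W} : IsZFSet G (e ⁻¹' B) ↔ IsZFSet H B := by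
  simp only [IsZFSet, e.propSet_preimage, e.preimage_eq_univ_iff]

lemma ptSet_preimage (e : G ≃g H) (B : Set W) : ptSet G (e ⁻¹' B) = ptSet H B := by
  simp only [ptSet, e.propSet_preimage, e.preimage_eq_univ_iff]

lemma ncard_preimage (e : G ≃g H) (B : Set W) : (e ⁻¹' B).ncard = B.ncard :=
  Set.ncard_preimage_of_injective_subset_range e.injective (by simp [e.surjective.range_eq])

lemma zfNum_eq (e : G ≃g H) : zfNum G = zfNum H := by
  simp only [zfNum, (Set.preimage_surjective.2 e.injective).exists, e.isZFSet_preimage,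
    e.ncard_preimage]

lemma isMinZFSet_preimage (e : G ≃g H) {B : Set W} :
    IsMinZFSet G (e ⁻¹' B) ↔ IsMinZFSet H B := by
  rw [IsMinZFSet, IsMinZFSet, e.isZFSet_preimage, e.ncard_preimage, e.zfNum_eq]

lemma ptMin_eq (e : G ≃g H) : ptMin G = ptMin H := by
  simp only [ptMin, Set.image, (Set.preimage_surjective.2 e.injective).exists, Set.mem_ofPred_eq,
    e.isMinZFSet_preimage, e.ptSet_preimage]

end SimpleGraph.Iso

/-- For a disconnected graph `G`, the following are equivalent:
`pt(G) = |G| - 2`; `PT(G) = |G| - 2`; `G = P_{n-1} ∪̇ P_1`. -/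
theorem disconnected_pt_tfae {V : Type*} [Finite V] [Nonempty V] (G : SimpleGraph V)
    (hd : ¬ G.Connected) :
    List.TFAE [ptMin G + 2 = Nat.card V,
      ptMax G + 2 = Nat.card V,
      Nonempty (G ≃g disjUnion (SimpleGraph.pathGraph (Nat.card V - 1))
        (SimpleGraph.pathGraph 1))] := by
  rw [disjUnion_eq_sum]
  obtain ⟨k, hk⟩ : ∃ k, Nat.card V = k + 2 :=
    Nat.exists_eq_add_of_le' ((Nat.le_add_left _ _).trans (ptMax_add_two_le hd))
  tfae_have 1 → 2 := fun h => by
    have := ptMin_le_ptMax (G := G)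
    have := ptMax_add_two_le hd
    omega
  tfae_have 2 → 3 := nonempty_iso_of_ptMax_add_two_eq hd
  tfae_have 3 → 1 := fun ⟨e⟩ => by
    rw [hk] at e ⊢
    rw [e.ptMin_eq]
    exact congrArg (· + 2) ptMin_pathGraph_sum_pathGraph_one
  tfae_finish
end
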